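/- For every digraph D, degreewidth(D) ≤ Δ_min(D), where Δ_min(D) = max over vertices v of min(d⁺(v), d⁻(v)). -/

import Mathlib

open scoped Classical

variable {V : Type*}

/-- The backedge graph of a digraph (arc relation `A`) w.r.t. an ordering `σ`. -/
def backedge (A : V → V → Prop) (σ : V → ℕ) : SimpleGraph V where
  Adj u v := (A u v ∧ σ v < σ u) ∨ (A v u ∧ σ u < σ v)
  symm := ⟨fun u v h => h.symm⟩
  loopless := ⟨fun v h => by rcases h with ⟨_, h⟩ | ⟨_, h⟩ <;> exact lt_irrefl _ h⟩

/-- The maximum degree of a simple graph on a finite vertex type. -/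
noncomputable def maxDeg [Fintype V] (G : SimpleGraph V) : ℕ :=
  Finset.univ.sup fun v => (G.neighborSet v).ncard

/-- The degreewidth of a digraph: minimum over (total) orderings of the
maximum degree of the backedge graph. -/
noncomputable def degreewidth [Fintype V] (A : V → V → Prop) : ℕ :=
  sInf {k | ∃ σ : V → ℕ, Function.Injective σ ∧ maxDeg (backedge A σ) = k}

/-- The undirected graph `D[F]` on `V` whose edges correspond to arcs of `F`. -/
def graphOf (F : V → V → Prop) : SimpleGraph V where
  Adj u v := u ≠ v ∧ (F u v ∨ F v u)
  symm := ⟨fun u v h => ⟨h.1.symm, h.2.symm⟩⟩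
  loopless := ⟨fun v h => h.1 rfl⟩

/-- A digraph is acyclic: no vertex lies on a directed cycle. -/
def DigraphAcyclic (A : V → V → Prop) : Prop := ∀ v, ¬ Relation.TransGen A v v

/-- `F` is a feedback arc set of the digraph `A`. -/
def IsFAS (A F : V → V → Prop) : Prop :=
  (∀ u v, F u v → A u v) ∧ DigraphAcyclic (fun u v => A u v ∧ ¬ F u v)

/-!
Fix an ordering minimising the number of backward arcs. Moving a single vertex `v` to the end
(resp. the beginning) keeps the status of every arc not incident to `v`, while afterwards the
only backward arcs at `v` are out-arcs (resp. in-arcs). By minimality, the backedge degree of `v`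
is therefore at most `d⁺(v)` and at most `d⁻(v)`.
-/

open Finset

lemma Function.Injective.update_of_forall_ne {α β : Type*} [DecidableEq α] {f : α → β}
    (hf : Function.Injective f) {a : α} {b : β} (hb : ∀ x, x ≠ a → f x ≠ b) :
    Function.Injective (Function.update f a b) := by
  intro x y hxy
  by_cases hx : x = a <;> by_cases hy : y = a
  · rw [hx, hy]
  · subst hx
    rw [Function.update_self, Function.update_of_ne hy] at hxy
    exact absurd hxy.symm (hb y hy)
  · subst hy
    rw [Function.update_self, Function.update_of_ne hx] at hxy
    exact absurd hxy (hb x hx)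
  · rwa [Function.update_of_ne hx, Function.update_of_ne hy, hf.eq_iff] at hxy

noncomputable def moveFirst (σ : V → ℕ) (v : V) : V → ℕ :=
  Function.update (σ · + 1) v 0

section MoveFirst

variable {σ : V → ℕ} {v : V}

lemma moveFirst_self_le (u : V) : moveFirst σ v v ≤ moveFirst σ v u := by
  simp [moveFirst]

lemma moveFirst_lt_iff {a b : V} (ha : a ≠ v) (hb : b ≠ v) :
    σ a < σ b ↔ moveFirst σ v a < moveFirst σ v b := by
  simp [moveFirst, Function.update_of_ne ha, Function.update_of_ne hb]

lemma injective_moveFirst (hσ : Function.Injective σ) : Function.Injective (moveFirst σ v) :=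
  ((add_left_injective 1).comp hσ).update_of_forall_ne fun _ _ => Nat.succ_ne_zero _

end MoveFirst

section Finite

variable [Fintype V]

noncomputable def moveLast (σ : V → ℕ) (v : V) : V → ℕ :=
  Function.update σ v (univ.sup σ + 1)

section MoveLast

variable {σ : V → ℕ} {v : V}

lemma lt_univ_sup_add_one (σ : V → ℕ) (u : V) : σ u < univ.sup σ + 1 :=
  Nat.lt_succ_of_le (le_sup (mem_univ u))

lemma moveLast_le_self (u : V) : moveLast σ v u ≤ moveLast σ v v := by
  rcases eq_or_ne u v with rfl | hu
  · rfl
  · rw [moveLast, Function.update_self, Function.update_of_ne hu]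
    exact (lt_univ_sup_add_one σ u).le

lemma moveLast_lt_iff {a b : V} (ha : a ≠ v) (hb : b ≠ v) :
    σ a < σ b ↔ moveLast σ v a < moveLast σ v b := by
  simp [moveLast, Function.update_of_ne ha, Function.update_of_ne hb]

lemma injective_moveLast (hσ : Function.Injective σ) : Function.Injective (moveLast σ v) :=
  hσ.update_of_forall_ne fun u _ => (lt_univ_sup_add_one σ u).ne

end MoveLast

noncomputable def backArcs (A : V → V → Prop) (σ : V → ℕ) : Finset (V × V) :=
  univ.filter fun p => A p.1 p.2 ∧ σ p.2 < σ p.1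

noncomputable def incidentBackArcs (A : V → V → Prop) (σ : V → ℕ) (v : V) : Finset (V × V) :=
  (backArcs A σ).filter fun p => p.1 = v ∨ p.2 = v

variable {A : V → V → Prop} {σ τ : V → ℕ} {v : V}

lemma card_backArcs_eq_add (A : V → V → Prop) (σ : V → ℕ) (v : V) :
    #(backArcs A σ) =
      #((backArcs A σ).filter fun p => ¬(p.1 = v ∨ p.2 = v)) + #(incidentBackArcs A σ v) := by
  rw [incidentBackArcs, add_comm, card_filter_add_card_filter_not]

-- A loop is never backward and, for `u ≠ v`, at most one of `(v, u)`, `(u, v)` is.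
lemma ncard_neighborSet_backedge (A : V → V → Prop) (σ : V → ℕ) (v : V) :
    ((backedge A σ).neighborSet v).ncard = #(incidentBackArcs A σ v) := by
  rw [← Set.ncard_coe_finset]
  refine Set.ncard_congr (fun u _ => if A v u ∧ σ u < σ v then (v, u) else (u, v)) ?_ ?_ ?_
  · intro u hu
    simp only [SimpleGraph.mem_neighborSet, backedge] at hu
    split_ifs <;> simp [incidentBackArcs, backArcs] <;> tauto
  · intro a b ha hb hab
    simp only [SimpleGraph.mem_neighborSet, backedge] at ha hb
    split_ifs at hab <;> simp only [Prod.mk.injEq] at hab <;> grind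
  · rintro ⟨a, b⟩ hp
    simp only [incidentBackArcs, backArcs, coe_filter, mem_filter, mem_univ, true_and,
      Set.mem_ofPred_eq] at hp
    obtain ⟨⟨hab, hlt⟩, rfl | rfl⟩ := hp
    · exact ⟨b, Or.inl ⟨hab, hlt⟩, by simp [hab, hlt]⟩
    · exact ⟨a, Or.inr ⟨hab, hlt⟩, by simp [hlt.not_gt]⟩

lemma card_incidentBackArcs_le_ncard_out (hv : ∀ u, σ u ≤ σ v) :
    #(incidentBackArcs A σ v) ≤ {w | A v w}.ncard := by
  calc #(incidentBackArcs A σ v) ≤ #((univ.filter (A v)).image (v, ·)) := by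
        refine card_le_card fun p hp => ?_
        simp only [incidentBackArcs, backArcs, mem_filter, mem_univ, true_and] at hp
        obtain ⟨⟨hA, hlt⟩, rfl | rfl⟩ := hp
        · exact mem_image.2 ⟨p.2, by simpa using hA⟩
        · exact absurd hlt (hv p.1).not_gt
    _ ≤ #(univ.filter (A v)) := card_image_le
    _ = {w | A v w}.ncard := by rw [← Set.ncard_coe_finset, coe_filter]; simp

lemma card_incidentBackArcs_le_ncard_in (hv : ∀ u, σ v ≤ σ u) :
    #(incidentBackArcs A σ v) ≤ {w | A w v}.ncard := by
  calc #(incidentBackArcs A σ v) ≤ #((univ.filter (A · v)).image (·, v)) := by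
        refine card_le_card fun p hp => ?_
        simp only [incidentBackArcs, backArcs, mem_filter, mem_univ, true_and] at hp
        obtain ⟨⟨hA, hlt⟩, rfl | rfl⟩ := hp
        · exact absurd hlt (hv p.2).not_gt
        · exact mem_image.2 ⟨p.1, by simpa using hA⟩
    _ ≤ #(univ.filter (A · v)) := card_image_le
    _ = {w | A w v}.ncard := by rw [← Set.ncard_coe_finset, coe_filter]; simp

lemma filter_backArcs_eq_of_lt_iff (h : ∀ a b, a ≠ v → b ≠ v → (σ a < σ b ↔ τ a < τ b)) :
    (backArcs A σ).filter (fun p => ¬(p.1 = v ∨ p.2 = v)) =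
      (backArcs A τ).filter (fun p => ¬(p.1 = v ∨ p.2 = v)) := by
  ext ⟨a, b⟩
  simp only [backArcs, mem_filter, mem_univ, true_and, not_or]
  constructor <;> rintro ⟨⟨hA, hlt⟩, ha, hb⟩
  · exact ⟨⟨hA, (h b a hb ha).1 hlt⟩, ha, hb⟩
  · exact ⟨⟨hA, (h b a hb ha).2 hlt⟩, ha, hb⟩

lemma ncard_neighborSet_backedge_le_of_card_backArcs_le
    (h : ∀ a b, a ≠ v → b ≠ v → (σ a < σ b ↔ τ a < τ b))
    (hle : #(backArcs A σ) ≤ #(backArcs A τ)) :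
    ((backedge A σ).neighborSet v).ncard ≤ #(incidentBackArcs A τ v) := by
  rw [card_backArcs_eq_add A σ v, card_backArcs_eq_add A τ v,
    filter_backArcs_eq_of_lt_iff h] at hle
  rw [ncard_neighborSet_backedge]
  omega

lemma exists_injective_forall_card_backArcs_le (A : V → V → Prop) :
    ∃ σ : V → ℕ, Function.Injective σ ∧
      ∀ τ : V → ℕ, Function.Injective τ → #(backArcs A σ) ≤ #(backArcs A τ) := by
  have hne : {σ : V → ℕ | Function.Injective σ}.Nonempty :=
    ⟨_, Fin.val_injective.comp (Fintype.equivFin V).injective⟩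
  let f : (V → ℕ) → ℕ := fun σ => #(backArcs A σ)
  exact ⟨_, Function.argminOn_mem f _ hne, fun τ hτ => Function.argminOn_le f _ hτ⟩

lemma ncard_neighborSet_backedge_le_min (hσ : Function.Injective σ)
    (hmin : ∀ τ : V → ℕ, Function.Injective τ → #(backArcs A σ) ≤ #(backArcs A τ)) (v : V) :
    ((backedge A σ).neighborSet v).ncard ≤ min {w | A v w}.ncard {w | A w v}.ncard :=
  le_min
    ((ncard_neighborSet_backedge_le_of_card_backArcs_le (fun _ _ => moveLast_lt_iff)
      (hmin _ (injective_moveLast hσ))).trans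
      (card_incidentBackArcs_le_ncard_out moveLast_le_self))
    ((ncard_neighborSet_backedge_le_of_card_backArcs_le (fun _ _ => moveFirst_lt_iff)
      (hmin _ (injective_moveFirst hσ))).trans
      (card_incidentBackArcs_le_ncard_in moveFirst_self_le))

end Finite

theorem degreewidth_le_DeltaMin_general [Fintype V] (A : V → V → Prop) :
    degreewidth A ≤
      Finset.univ.sup (fun v => min ({w | A v w}.ncard) ({w | A w v}.ncard)) := by
  obtain ⟨σ, hσ, hmin⟩ := exists_injective_forall_card_backArcs_le A
  calc degreewidth A ≤ maxDeg (backedge A σ) := Nat.sInf_le ⟨σ, hσ, rfl⟩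
    _ ≤ _ := Finset.sup_mono_fun fun v _ => ncard_neighborSet_backedge_le_min hσ hmin v

/-- `degreewidth(D) ≤ Δ_min(D) = max over v of min(d⁺(v), d⁻(v))`. -/
theorem degreewidth_le_DeltaMin [Fintype V] (A : V → V → Prop) (hA : Irreflexive A) :
    degreewidth A ≤
      Finset.univ.sup (fun v => min ({w | A v w}.ncard) ({w | A w v}.ncard)) :=
  degreewidth_le_DeltaMin_general A
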